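/- Corollary (global quadratic bound with the constant σ*). Assume in addition that 𝒥_{ij}(t) ≠ 0 for all (i,j) ∈ E and all t. Suppose 𝒦_{ij} : ℝ → ℝ ((i,j) ∈ V × V) are continuous τ-periodic functions with 𝒦_{ij}(t) = −𝒦_{ji}(t) for all i,j,t, identically zero when (i,j) ∉ E, satisfying Σ_{j∈V} 𝒦_{ij}(t) = 0 for all i and t, and such that K := (1/τ)∫₀^τ (1/2)Σ_{(i,j)∈V×V} α_{ij}(t)𝒦_{ij}(t) dt ≠ 0. Define σ* := (1/2) Σ_{(i,j)∈E} (1/τ)∫₀^τ [𝒦_{ij}(t)²/𝒥_{ij}(t)] · log(𝒬_{ij}(t)/𝒬_{ji}(t)) dt. Then for EVERY y ∈ ℝ it holds I_{α,γ}(y) ≤ (1/4) · (σ*/K²) · (y − y_{α,γ})² (an inequality in [0,∞]; this bound is global, with no error term). -/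

import Mathlib

/-!
Keep `ρ = π` and tilt the traffic: on each pair of opposite edges choose `Q_ij, Q_ji > 0` with
`Q_ij - Q_ji = 𝒥_ij + c 𝒦_ij` and `Q_ij Q_ji = 𝒬_ij 𝒬_ji`, where `c = (y - y_{α,γ}) / K`. Since `𝒦`
is divergence-free, `(Q, π)` still satisfies the continuity equation, and since `α` is
antisymmetric the observable moves by exactly `c K`, so the pair is admissible for `y`.

Writing `𝒬_ij = m e^V`, `𝒬_ji = m e^{-V}`, `Q_ij = m e^X`, `Q_ji = m e^{-X}`, the cost of the pair
is `2m` times the Bregman divergence `cosh V - cosh X - (V - X) sinh X`. Because `sinh x / x`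
increases on `[0, ∞)`, this divergence is at most `(sinh X - sinh V)² V / (2 sinh V)`, which is
`c² 𝒦_ij² log(𝒬_ij / 𝒬_ji) / (4 𝒥_ij)`; summing over `E` gives `c² σ* / 4`.
-/

open MeasureTheory Filter
open scoped Topology ENNReal

/-- The function `Φ(q,p) = q log(q/p) − q + p` on `[0,∞) × [0,∞)` with values in `[0,∞]`,
with the conventions `Φ(0,p) = p` and `Φ(q,0) = ∞` for `q > 0`. -/
noncomputable def Phi (q p : ℝ) : ℝ≥0∞ :=
  if q = 0 then ENNReal.ofReal p
  else if p = 0 then ⊤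
  else ENNReal.ofReal (q * Real.log (q / p) - q + p)

open Real Set InformationTheory

lemma Phi_eq_ofReal_mul_klFun {q p : ℝ} (hq : 0 ≤ q) (hp : 0 < p) :
    Phi q p = ENNReal.ofReal (p * klFun (q / p)) := by
  have hkl : p * klFun (q / p) = q * log (q / p) - q + p := by
    rw [klFun_apply]; field_simp; ring
  rcases hq.eq_or_lt with rfl | hq
  · simp [Phi, klFun_zero]
  · rw [Phi, if_neg hq.ne', if_neg hp.ne', hkl]

lemma convexOn_sinh_Ici : ConvexOn ℝ (Ici 0) sinh := by
  refine MonotoneOn.convexOn_of_deriv (convex_Ici 0) continuous_sinh.continuousOn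
    differentiable_sinh.differentiableOn ?_
  rw [interior_Ici, Real.deriv_sinh]
  intro x hx y hy hxy
  rw [cosh_le_cosh, abs_of_pos hx, abs_of_pos hy]
  exact hxy

lemma mul_sinh_le_mul_sinh {u v : ℝ} (hu : 0 ≤ u) (huv : u ≤ v) :
    v * sinh u ≤ u * sinh v := by
  rcases (hu.trans huv).eq_or_lt with rfl | hv
  · simp [le_antisymm huv hu]
  have h := convexOn_sinh_Ici.2 (mem_Ici.2 hv.le) (mem_Ici.2 le_rfl) (div_nonneg hu hv.le)
    (sub_nonneg.2 ((div_le_one hv).2 huv)) (add_sub_cancel _ _)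
  simp only [smul_eq_mul, mul_zero, add_zero, sinh_zero, div_mul_cancel₀ _ hv.ne'] at h
  rw [div_mul_eq_mul_div, le_div_iff₀ hv] at h
  linarith

lemma cosh_bregman_le_of_pos {V : ℝ} (hV : 0 < V) (X : ℝ) :
    cosh V - cosh X - (V - X) * sinh X ≤ (sinh X - sinh V) ^ 2 * (V / sinh V) / 2 := by
  set κ := V / sinh V
  have hsV : 0 < sinh V := sinh_pos_iff.2 hV
  have hκ : κ * sinh V = V := div_mul_cancel₀ V hsV.ne'
  clear_value κ
  -- `k V - k X` is the gap in the inequality; `k' x = cosh x * (x - κ * sinh x)` changes sign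
  -- on `[0, ∞)` only at `V`, since `sinh x / x` increases there.
  set k : ℝ → ℝ := fun x => x * sinh x - cosh x - κ * sinh x ^ 2 / 2 with hk
  have hk_deriv (x : ℝ) : HasDerivAt k (cosh x * (x - κ * sinh x)) x := by
    have := (((hasDerivAt_id x).mul (hasDerivAt_sinh x)).sub (hasDerivAt_cosh x)).sub
      (((hasDerivAt_sinh x).pow 2).const_mul κ |>.div_const 2)
    exact this.congr_deriv (by simp only [id, Nat.cast_ofNat]; ring)
  have hk_cont : Continuous k := by fun_prop
  have hk_mono : MonotoneOn k (Icc 0 V) := by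
    refine monotoneOn_of_hasDerivWithinAt_nonneg (convex_Icc 0 V) hk_cont.continuousOn
      (fun x _ => (hk_deriv x).hasDerivWithinAt) fun x hx => ?_
    rw [interior_Icc] at hx
    have h := mul_sinh_le_mul_sinh hx.1.le hx.2.le
    have : κ * sinh x ≤ x := by
      refine le_of_mul_le_mul_right ?_ hsV
      linear_combination h + sinh x * hκ
    exact mul_nonneg (cosh_pos x).le (by linarith)
  have hk_anti : AntitoneOn k (Ici V) := by
    refine antitoneOn_of_hasDerivWithinAt_nonpos (convex_Ici V) hk_cont.continuousOn
      (fun x _ => (hk_deriv x).hasDerivWithinAt) fun x hx => ?_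
    rw [interior_Ici] at hx
    have h := mul_sinh_le_mul_sinh hV.le (le_of_lt hx)
    have : x ≤ κ * sinh x := by
      refine le_of_mul_le_mul_right ?_ hsV
      linear_combination h - sinh x * hκ
    exact mul_nonpos_of_nonneg_of_nonpos (cosh_pos x).le (by linarith)
  have hk_abs : k |X| = k X := by
    rcases abs_cases X with ⟨h, -⟩ | ⟨h, -⟩ <;> simp [hk, h]
  have hkX : k X ≤ k V := by
    rw [← hk_abs]
    rcases le_total |X| V with h | h
    · exact hk_mono ⟨abs_nonneg X, h⟩ ⟨hV.le, le_rfl⟩ h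
    · exact hk_anti (mem_Ici.2 le_rfl) (mem_Ici.2 h) h
  simp only [hk] at hkX
  linear_combination hkX + (sinh X - sinh V) * hκ

lemma cosh_bregman_le {V : ℝ} (hV : V ≠ 0) (X : ℝ) :
    cosh V - cosh X - (V - X) * sinh X ≤ (sinh X - sinh V) ^ 2 * (V / sinh V) / 2 := by
  rcases hV.lt_or_gt with hV | hV
  · have h := cosh_bregman_le_of_pos (neg_pos.2 hV) (-X)
    simp only [cosh_neg, sinh_neg, neg_div_neg_eq] at h
    linear_combination h
  · exact cosh_bregman_le_of_pos hV X

lemma exists_eq_mul_exp_of_mul_eq_sq {a b m : ℝ} (ha : 0 < a) (hm : 0 < m)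
    (hab : a * b = m ^ 2) :
    ∃ X, a = m * exp X ∧ b = m * exp (-X) := by
  refine ⟨log (a / m), ?_, ?_⟩
  · rw [exp_log (div_pos ha hm)]; field_simp
  · rw [exp_neg, exp_log (div_pos ha hm)]; field_simp; linear_combination hab

lemma mul_klFun_add_mul_klFun_le {q q' Q Q' : ℝ} (hq : 0 < q) (hq' : 0 < q') (hQ : 0 < Q)
    (hQQ' : Q * Q' = q * q') (hne : q ≠ q') :
    q * klFun (Q / q) + q' * klFun (Q' / q') ≤
      (Q - Q' - (q - q')) ^ 2 * log (q / q') / (4 * (q - q')) := by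
  obtain ⟨m, hm, hm2⟩ : ∃ m, 0 < m ∧ q * q' = m ^ 2 :=
    ⟨√(q * q'), sqrt_pos.2 (mul_pos hq hq'), (sq_sqrt (mul_pos hq hq').le).symm⟩
  obtain ⟨V, rfl, rfl⟩ := exists_eq_mul_exp_of_mul_eq_sq hq hm hm2
  obtain ⟨X, rfl, rfl⟩ := exists_eq_mul_exp_of_mul_eq_sq hQ hm (hQQ'.trans hm2)
  have hV : V ≠ 0 := by rintro rfl; simp at hne
  have hsV : sinh V ≠ 0 := sinh_ne_zero.2 hV
  have hdiff (x : ℝ) : m * exp x - m * exp (-x) = 2 * m * sinh x := by rw [sinh_eq]; ring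
  have hratio (x y : ℝ) : m * exp x / (m * exp y) = exp (x - y) := by
    rw [mul_div_mul_left _ _ hm.ne', exp_sub]
  calc m * exp V * klFun (m * exp X / (m * exp V)) +
        m * exp (-V) * klFun (m * exp (-X) / (m * exp (-V)))
      = 2 * m * (cosh V - cosh X - (V - X) * sinh X) := by
        simp only [hratio, klFun_apply, log_exp]
        simp only [exp_sub, exp_neg, cosh_eq, sinh_eq]
        field_simp
        ring
    _ ≤ 2 * m * ((sinh X - sinh V) ^ 2 * (V / sinh V) / 2) := by
        gcongr
        exact cosh_bregman_le hV X
    _ = _ := by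
        rw [hdiff, hdiff, hratio, log_exp]
        field_simp
        ring

lemma sum_sum_mul_eq_half_sum_sum_mul_sub {V : Type*} [Fintype V] {α : V → V → ℝ}
    (hα : ∀ i j, α i j = -α j i) (Q : V → V → ℝ) :
    ∑ i, ∑ j, α i j * Q i j = (1 / 2) * ∑ i, ∑ j, α i j * (Q i j - Q j i) := by
  have hswap : ∑ i, ∑ j, α i j * Q j i = -∑ i, ∑ j, α i j * Q i j := by
    rw [Finset.sum_comm, ← Finset.sum_neg_distrib]
    refine Finset.sum_congr rfl fun i _ => ?_
    rw [← Finset.sum_neg_distrib]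
    exact Finset.sum_congr rfl fun j _ => by rw [hα j i]; ring
  simp only [mul_sub, Finset.sum_sub_distrib, hswap]
  ring

lemma Finset.sum_le_sum_of_add_swap_le {α : Type*} {E : Finset (α × α)}
    (hE : ∀ e ∈ E, e.swap ∈ E) {f g : α × α → ℝ}
    (h : ∀ e ∈ E, f e + f e.swap ≤ g e + g e.swap) : ∑ e ∈ E, f e ≤ ∑ e ∈ E, g e := by
  have hswap (u : α × α → ℝ) : ∑ e ∈ E, u e.swap = ∑ e ∈ E, u e :=
    Finset.sum_equiv (Equiv.prodComm α α)
      (fun e => ⟨hE e, fun he => by simpa using hE _ he⟩) fun _ _ => rfl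
  have := Finset.sum_le_sum h
  rw [Finset.sum_add_distrib, Finset.sum_add_distrib, hswap f, hswap g] at this
  linarith

lemma sum_ofReal_mul_setLIntegral_le {ι : Type*} {s : Finset ι} {τ : ℝ} (hτ : 0 < τ)
    {f g : ι → ℝ → ℝ} (hf : ∀ i ∈ s, Continuous (f i)) (hf₀ : ∀ i ∈ s, ∀ t, 0 ≤ f i t)
    (hg : ∀ i ∈ s, Continuous (g i)) (hfg : ∀ t, ∑ i ∈ s, f i t ≤ ∑ i ∈ s, g i t) :
    ∑ i ∈ s, ENNReal.ofReal (1 / τ) * ∫⁻ t in Ioc 0 τ, ENNReal.ofReal (f i t) ≤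
      ENNReal.ofReal (∑ i ∈ s, (1 / τ) * ∫ t in (0 : ℝ)..τ, g i t) := by
  have hf_int (i) (hi : i ∈ s) : IntervalIntegrable (f i) volume 0 τ :=
    (hf i hi).intervalIntegrable 0 τ
  have hg_int (i) (hi : i ∈ s) : IntervalIntegrable (g i) volume 0 τ :=
    (hg i hi).intervalIntegrable 0 τ
  have hf_avg_nonneg (i) (hi : i ∈ s) : 0 ≤ (1 / τ) * ∫ t in (0 : ℝ)..τ, f i t :=
    mul_nonneg (by positivity) (intervalIntegral.integral_nonneg hτ.le fun t _ => hf₀ i hi t)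
  calc ∑ i ∈ s, ENNReal.ofReal (1 / τ) * ∫⁻ t in Ioc 0 τ, ENNReal.ofReal (f i t)
      = ∑ i ∈ s, ENNReal.ofReal ((1 / τ) * ∫ t in (0 : ℝ)..τ, f i t) := by
        refine Finset.sum_congr rfl fun i hi => ?_
        rw [ENNReal.ofReal_mul (by positivity), intervalIntegral.integral_of_le hτ.le,
          ofReal_integral_eq_lintegral_ofReal (hf i hi).integrableOn_Ioc
            (ae_of_all _ (hf₀ i hi))]
    _ = ENNReal.ofReal (∑ i ∈ s, (1 / τ) * ∫ t in (0 : ℝ)..τ, f i t) :=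
        (ENNReal.ofReal_sum_of_nonneg hf_avg_nonneg).symm
    _ ≤ ENNReal.ofReal (∑ i ∈ s, (1 / τ) * ∫ t in (0 : ℝ)..τ, g i t) := by
        refine ENNReal.ofReal_le_ofReal ?_
        rw [← Finset.mul_sum, ← Finset.mul_sum, ← intervalIntegral.integral_finsetSum hf_int,
          ← intervalIntegral.integral_finsetSum hg_int]
        gcongr
        exact intervalIntegral.integral_mono_on hτ.le
          ((continuous_finsetSum s hf).intervalIntegrable 0 τ)
          ((continuous_finsetSum s hg).intervalIntegrable 0 τ) fun t _ => hfg t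

/-- The positive root of `Q ^ 2 - C * Q - p = 0`; together with `Q' = tiltedFlux (-C) p` it
solves `Q - Q' = C`, `Q * Q' = p`. -/
noncomputable def tiltedFlux (C p : ℝ) : ℝ := (C + √(C ^ 2 + 4 * p)) / 2

lemma tiltedFlux_sub_tiltedFlux_neg (C p : ℝ) : tiltedFlux C p - tiltedFlux (-C) p = C := by
  simp only [tiltedFlux, neg_sq]
  ring

lemma tiltedFlux_mul_tiltedFlux_neg {p : ℝ} (hp : 0 ≤ p) (C : ℝ) :
    tiltedFlux C p * tiltedFlux (-C) p = p := by
  have h := sq_sqrt (show 0 ≤ C ^ 2 + 4 * p by positivity)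
  simp only [tiltedFlux, neg_sq]
  linear_combination h / 4

lemma tiltedFlux_nonneg {p : ℝ} (hp : 0 ≤ p) (C : ℝ) : 0 ≤ tiltedFlux C p := by
  have h : |C| ≤ √(C ^ 2 + 4 * p) := abs_le_sqrt (by linarith)
  have := neg_abs_le C
  unfold tiltedFlux
  linarith

lemma tiltedFlux_pos {p : ℝ} (hp : 0 < p) (C : ℝ) : 0 < tiltedFlux C p := by
  have h : |C| < √(C ^ 2 + 4 * p) := by
    rw [lt_sqrt (abs_nonneg C), sq_abs]
    linarith
  have := neg_abs_le C
  unfold tiltedFlux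
  linarith

lemma tiltedFlux_zero_zero : tiltedFlux 0 0 = 0 := by
  simp [tiltedFlux]

lemma Continuous.tiltedFlux {C p : ℝ → ℝ} (hC : Continuous C) (hp : Continuous p) :
    Continuous fun t => _root_.tiltedFlux (C t) (p t) := by
  unfold _root_.tiltedFlux
  fun_prop

section PerturbedFlux

variable {V : Type*} {q K : V → V → ℝ → ℝ} {c : ℝ}

noncomputable def perturbedFlux (q K : V → V → ℝ → ℝ) (c : ℝ) (i j : V) (t : ℝ) : ℝ :=
  tiltedFlux (q i j t - q j i t + c * K i j t) (q i j t * q j i t)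

lemma perturbedFlux_swap (hK : ∀ i j t, K i j t = -K j i t) (i j : V) (t : ℝ) :
    perturbedFlux q K c j i t =
      tiltedFlux (-(q i j t - q j i t + c * K i j t)) (q i j t * q j i t) := by
  rw [perturbedFlux, hK j i t, mul_comm (q j i t)]
  ring_nf

lemma perturbedFlux_sub_swap (hK : ∀ i j t, K i j t = -K j i t) (i j : V) (t : ℝ) :
    perturbedFlux q K c i j t - perturbedFlux q K c j i t = q i j t - q j i t + c * K i j t := by
  rw [perturbedFlux_swap hK i j t, perturbedFlux, tiltedFlux_sub_tiltedFlux_neg]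

lemma perturbedFlux_mul_swap (hK : ∀ i j t, K i j t = -K j i t) {i j : V} {t : ℝ}
    (hq : 0 ≤ q i j t * q j i t) :
    perturbedFlux q K c i j t * perturbedFlux q K c j i t = q i j t * q j i t := by
  rw [perturbedFlux_swap hK i j t, perturbedFlux, tiltedFlux_mul_tiltedFlux_neg hq]

lemma perturbedFlux_nonneg (hq : ∀ i j t, 0 ≤ q i j t) (i j : V) (t : ℝ) :
    0 ≤ perturbedFlux q K c i j t :=
  tiltedFlux_nonneg (mul_nonneg (hq i j t) (hq j i t)) _

lemma perturbedFlux_pos {i j : V} {t : ℝ} (hij : 0 < q i j t) (hji : 0 < q j i t) :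
    0 < perturbedFlux q K c i j t :=
  tiltedFlux_pos (mul_pos hij hji) _

lemma perturbedFlux_eq_zero {i j : V} {t : ℝ} (hij : q i j t = 0) (hji : q j i t = 0)
    (hK : K i j t = 0) : perturbedFlux q K c i j t = 0 := by
  simp [perturbedFlux, hij, hji, hK, tiltedFlux_zero_zero]

lemma continuous_perturbedFlux {i j : V} (hij : Continuous (q i j)) (hji : Continuous (q j i))
    (hK : Continuous (K i j)) : Continuous (perturbedFlux q K c i j) :=
  (((hij.sub hji).add (continuous_const.mul hK)).tiltedFlux (hij.mul hji))

lemma perturbedFlux_periodic {τ : ℝ} {i j : V} (hij : Function.Periodic (q i j) τ)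
    (hji : Function.Periodic (q j i) τ) (hK : Function.Periodic (K i j) τ) :
    Function.Periodic (perturbedFlux q K c i j) τ := fun t => by
  simp only [perturbedFlux, hij t, hji t, hK t]

variable [Fintype V]

lemma sum_perturbedFlux_sub_sum (hK : ∀ i j t, K i j t = -K j i t)
    (hK_div : ∀ i t, ∑ j, K i j t = 0) (i : V) (t : ℝ) :
    ∑ j, perturbedFlux q K c i j t - ∑ j, perturbedFlux q K c j i t =
      ∑ j, q i j t - ∑ j, q j i t := by
  simp only [← Finset.sum_sub_distrib, perturbedFlux_sub_swap hK, Finset.sum_add_distrib,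
    ← Finset.mul_sum, hK_div, mul_zero, add_zero]

lemma sum_sum_mul_perturbedFlux {α : V → V → ℝ → ℝ} (hα : ∀ i j t, α i j t = -α j i t)
    (hK : ∀ i j t, K i j t = -K j i t) (t : ℝ) :
    ∑ i, ∑ j, α i j t * perturbedFlux q K c i j t =
      ∑ i, ∑ j, α i j t * q i j t + c * ((1 / 2) * ∑ i, ∑ j, α i j t * K i j t) := by
  rw [sum_sum_mul_eq_half_sum_sum_mul_sub (fun i j => hα i j t),
    sum_sum_mul_eq_half_sum_sum_mul_sub (fun i j => hα i j t) (fun i j => q i j t)]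
  simp only [perturbedFlux_sub_swap hK, mul_add, Finset.sum_add_distrib, mul_left_comm _ c,
    ← Finset.mul_sum]

end PerturbedFlux

section Cost

variable {V : Type*} {q K : V → V → ℝ → ℝ}

lemma avg_sum_sum_mul_perturbedFlux_add [Fintype V] {α : V → V → ℝ → ℝ} {b : ℝ → ℝ}
    (hα_cont : ∀ i j, Continuous (α i j)) (hα : ∀ i j t, α i j t = -α j i t)
    (hq_cont : ∀ i j, Continuous (q i j)) (hK_cont : ∀ i j, Continuous (K i j))
    (hK : ∀ i j t, K i j t = -K j i t) (hb : Continuous b) (τ c : ℝ) :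
    (1 / τ) * ∫ t in (0 : ℝ)..τ, (∑ i, ∑ j, α i j t * perturbedFlux q K c i j t + b t) =
      (1 / τ) * (∫ t in (0 : ℝ)..τ, (∑ i, ∑ j, α i j t * q i j t + b t)) +
        c * ((1 / τ) * ∫ t in (0 : ℝ)..τ, (1 / 2) * ∑ i, ∑ j, α i j t * K i j t) := by
  have hA : Continuous fun t => ∑ i, ∑ j, α i j t * q i j t + b t := by fun_prop
  have hB : Continuous fun t => (1 / 2) * ∑ i, ∑ j, α i j t * K i j t := by fun_prop
  simp_rw [sum_sum_mul_perturbedFlux hα hK, add_right_comm _ (c * _) (b _)]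
  have hcB : IntervalIntegrable (fun t => c * ((1 / 2) * ∑ i, ∑ j, α i j t * K i j t))
      volume 0 τ := (continuous_const.mul hB).intervalIntegrable 0 τ
  rw [intervalIntegral.integral_add (hA.intervalIntegrable 0 τ) hcB,
    intervalIntegral.integral_const_mul]
  ring

variable {E : Finset (V × V)}

lemma sum_mul_klFun_perturbedFlux_le (hE : ∀ e ∈ E, e.swap ∈ E)
    (hq : ∀ i j, (i, j) ∈ E → ∀ t, 0 < q i j t)
    (hJ : ∀ i j, (i, j) ∈ E → ∀ t, q i j t - q j i t ≠ 0)
    (hK : ∀ i j t, K i j t = -K j i t) (c t : ℝ) :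
    ∑ e ∈ E, q e.1 e.2 t * klFun (perturbedFlux q K c e.1 e.2 t / q e.1 e.2 t) ≤
      ∑ e ∈ E, c ^ 2 / 8 * (K e.1 e.2 t ^ 2 / (q e.1 e.2 t - q e.2 e.1 t) *
        log (q e.1 e.2 t / q e.2 e.1 t)) := by
  refine Finset.sum_le_sum_of_add_swap_le hE fun ⟨i, j⟩ hij => ?_
  have hq_ij := hq i j hij t
  have hq_ji := hq j i (hE _ hij) t
  have hJij := hJ i j hij t
  have hJji : q j i t - q i j t ≠ 0 := by rwa [← neg_sub, neg_ne_zero]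
  have hpair := mul_klFun_add_mul_klFun_le hq_ij hq_ji (perturbedFlux_pos (c := c) hq_ij hq_ji)
    (perturbedFlux_mul_swap (c := c) hK (mul_pos hq_ij hq_ji).le) (sub_ne_zero.1 hJij)
  rw [perturbedFlux_sub_swap hK, add_sub_cancel_left] at hpair
  have hlog : log (q j i t / q i j t) = -log (q i j t / q j i t) := by rw [← log_inv, inv_div]
  refine hpair.trans (le_of_eq ?_)
  simp only [Prod.swap_prod_mk, hK j i t, hlog]
  field_simp
  ring

lemma sum_ofReal_mul_setLIntegral_Phi_perturbedFlux_le {τ : ℝ} (hτ : 0 < τ)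
    (hE : ∀ e ∈ E, e.swap ∈ E) (hq_cont : ∀ i j, Continuous (q i j))
    (hq : ∀ i j, (i, j) ∈ E → ∀ t, 0 < q i j t)
    (hJ : ∀ i j, (i, j) ∈ E → ∀ t, q i j t - q j i t ≠ 0)
    (hK_cont : ∀ i j, Continuous (K i j)) (hK : ∀ i j t, K i j t = -K j i t) (c : ℝ) :
    ∑ e ∈ E, ENNReal.ofReal (1 / τ) *
        ∫⁻ t in Ioc 0 τ, Phi (perturbedFlux q K c e.1 e.2 t) (q e.1 e.2 t) ≤
      ENNReal.ofReal (c ^ 2 / 4 * ((1 / 2) * ∑ e ∈ E, (1 / τ) * ∫ t in (0 : ℝ)..τ,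
        K e.1 e.2 t ^ 2 / (q e.1 e.2 t - q e.2 e.1 t) * log (q e.1 e.2 t / q e.2 e.1 t))) := by
  have hQ_pos (e) (he : e ∈ E) (t) : 0 < perturbedFlux q K c e.1 e.2 t :=
    perturbedFlux_pos (hq _ _ he t) (hq _ _ (hE e he) t)
  have hQ_cont (e : V × V) : Continuous (perturbedFlux q K c e.1 e.2) :=
    continuous_perturbedFlux (hq_cont _ _) (hq_cont _ _) (hK_cont _ _)
  calc _ = ∑ e ∈ E, ENNReal.ofReal (1 / τ) * ∫⁻ t in Ioc 0 τ,
        ENNReal.ofReal (q e.1 e.2 t * klFun (perturbedFlux q K c e.1 e.2 t / q e.1 e.2 t)) :=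
        Finset.sum_congr rfl fun e he => congrArg _ <| lintegral_congr fun t =>
          Phi_eq_ofReal_mul_klFun (hQ_pos e he t).le (hq _ _ he t)
    _ ≤ ENNReal.ofReal (∑ e ∈ E, (1 / τ) * ∫ t in (0 : ℝ)..τ, c ^ 2 / 8 *
        (K e.1 e.2 t ^ 2 / (q e.1 e.2 t - q e.2 e.1 t) * log (q e.1 e.2 t / q e.2 e.1 t))) :=
        sum_ofReal_mul_setLIntegral_le hτ
          (fun e he => (hq_cont _ _).mul (continuous_klFun.comp
            ((hQ_cont e).div (hq_cont _ _) fun t => (hq _ _ he t).ne')))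
          (fun e he t => mul_nonneg (hq _ _ he t).le
            (klFun_nonneg (div_pos (hQ_pos e he t) (hq _ _ he t)).le))
          (fun e he => continuous_const.mul ((((hK_cont _ _).pow 2).div
            ((hq_cont _ _).sub (hq_cont _ _)) (hJ _ _ he)).mul
            (((hq_cont _ _).div (hq_cont _ _) fun t => (hq _ _ (hE e he) t).ne').log
              fun t => (div_pos (hq _ _ he t) (hq _ _ (hE e he) t)).ne')))
          (sum_mul_klFun_perturbedFlux_le hE hq hJ hK c)
    _ = _ := by
        simp only [intervalIntegral.integral_const_mul, Finset.mul_sum]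
        exact congrArg _ (Finset.sum_congr rfl fun _ _ => by ring)

end Cost

theorem stmt7_general
    {V : Type} [Fintype V]
    (E : Finset (V × V))
    (hE_symm : ∀ i j : V, (i, j) ∈ E ↔ (j, i) ∈ E)
    (τ : ℝ) (hτ : 0 < τ)
    (w : V → V → ℝ → ℝ)
    (hw_cont : ∀ i j, Continuous (w i j))
    (hw_per : ∀ i j, Function.Periodic (w i j) τ)
    (hw_pos : ∀ i j, (i, j) ∈ E → ∀ t, 0 < w i j t)
    (hw_zero : ∀ i j, (i, j) ∉ E → ∀ t, w i j t = 0)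
    (pi : V → ℝ → ℝ)
    (hpi_diff : ∀ i, ContDiff ℝ 1 (pi i))
    (hpi_per : ∀ i, Function.Periodic (pi i) τ)
    (hpi_pos : ∀ i t, 0 < pi i t)
    (hpi_sum : ∀ t : ℝ, ∑ i, pi i t = 1)
    (hpi_cont_eq : ∀ i t, deriv (pi i) t
      + (∑ j, pi i t * w i j t) - (∑ j, pi j t * w j i t) = 0)
    (hJ_ne : ∀ i j, (i, j) ∈ E → ∀ t : ℝ,
      pi i t * w i j t - pi j t * w j i t ≠ 0)
    (α : V → V → ℝ → ℝ)
    (hα_cont : ∀ i j, Continuous (α i j))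
    (hα_anti : ∀ i j (t : ℝ), α i j t = - α j i t)
    (γ : V → ℝ → ℝ)
    (hγ_cont : ∀ i, Continuous (γ i))
    (y0 : ℝ)
    (hy0 : y0 = (1 / τ) * (∫ t in (0:ℝ)..τ,
      ((∑ i, ∑ j, α i j t * (pi i t * w i j t)) + ∑ i, γ i t * pi i t)))
    (Iag : ℝ → ℝ≥0∞)
    (hI : ∀ y : ℝ, Iag y = sInf { c : ℝ≥0∞ |
      ∃ (Q : V → V → ℝ → ℝ) (ρ : V → ℝ → ℝ),
        (∀ i j, Continuous (Q i j)) ∧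
        (∀ i j, Function.Periodic (Q i j) τ) ∧
        (∀ i j t, 0 ≤ Q i j t) ∧
        (∀ i j, (i, j) ∉ E → ∀ t, Q i j t = 0) ∧
        (∀ i, ContDiff ℝ 1 (ρ i)) ∧
        (∀ i, Function.Periodic (ρ i) τ) ∧
        (∀ i t, 0 ≤ ρ i t) ∧
        (∀ t : ℝ, ∑ i, ρ i t = 1) ∧
        (∀ i t, deriv (ρ i) t + (∑ j, Q i j t) - (∑ j, Q j i t) = 0) ∧
        ((1 / τ) * (∫ t in (0:ℝ)..τ,
          ((∑ i, ∑ j, α i j t * Q i j t) + ∑ i, γ i t * ρ i t)) = y) ∧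
        c = ∑ e ∈ E, ENNReal.ofReal (1 / τ) *
          (∫⁻ t in Set.Ioc (0:ℝ) τ, Phi (Q e.1 e.2 t) (ρ e.1 t * w e.1 e.2 t)) })
    -- the divergence-free current 𝒦
    (K : V → V → ℝ → ℝ)
    (hK_cont : ∀ i j, Continuous (K i j))
    (hK_per : ∀ i j, Function.Periodic (K i j) τ)
    (hK_anti : ∀ i j (t : ℝ), K i j t = - K j i t)
    (hK_zero : ∀ i j, (i, j) ∉ E → ∀ t, K i j t = 0)
    (hK_div : ∀ i (t : ℝ), (∑ j, K i j t) = 0)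
    (Kav : ℝ)
    (hKav : Kav = (1 / τ) * (∫ t in (0:ℝ)..τ, (1 / 2) * ∑ i, ∑ j, α i j t * K i j t))
    (hKav_ne : Kav ≠ 0)
    (σstar : ℝ)
    (hσstar : σstar = (1 / 2) * ∑ e ∈ E, (1 / τ) * (∫ t in (0:ℝ)..τ,
      ((K e.1 e.2 t) ^ 2 / (pi e.1 t * w e.1 e.2 t - pi e.2 t * w e.2 e.1 t)) *
        Real.log ((pi e.1 t * w e.1 e.2 t) / (pi e.2 t * w e.2 e.1 t)))) :
    ∀ y : ℝ, Iag y ≤ ENNReal.ofReal ((1 / 4) * (σstar / Kav ^ 2) * (y - y0) ^ 2) := by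
  intro y
  set c := (y - y0) / Kav with hc
  have hpi_cont (i : V) : Continuous (pi i) := (hpi_diff i).continuous
  have hq_cont (i j : V) : Continuous fun t => pi i t * w i j t :=
    (hpi_cont i).mul (hw_cont i j)
  have hq_pos (i j : V) (hij : (i, j) ∈ E) (t : ℝ) : 0 < pi i t * w i j t :=
    mul_pos (hpi_pos i t) (hw_pos i j hij t)
  have hq_zero (i j : V) (hij : (i, j) ∉ E) (t : ℝ) : pi i t * w i j t = 0 := by
    rw [hw_zero i j hij t, mul_zero]
  have hq_nonneg (i j : V) (t : ℝ) : 0 ≤ pi i t * w i j t := by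
    by_cases hij : (i, j) ∈ E
    exacts [(hq_pos i j hij t).le, (hq_zero i j hij t).ge]
  have hE_swap : ∀ e ∈ E, e.swap ∈ E := fun e he => (hE_symm _ _).1 he
  have hE_swap' (i j : V) (hij : (i, j) ∉ E) : (j, i) ∉ E := fun h => hij ((hE_symm j i).1 h)
  have hflow := sum_perturbedFlux_sub_sum (q := fun i j t => pi i t * w i j t) (c := c)
    hK_anti hK_div
  have havg := avg_sum_sum_mul_perturbedFlux_add (b := fun t => ∑ i, γ i t * pi i t)
    hα_cont hα_anti hq_cont hK_cont hK_anti (by fun_prop) τ c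
  rw [← hy0, ← hKav, hc, div_mul_cancel₀ _ hKav_ne, add_sub_cancel] at havg
  have hcost := sum_ofReal_mul_setLIntegral_Phi_perturbedFlux_le hτ hE_swap hq_cont hq_pos
    hJ_ne hK_cont hK_anti c
  rw [← hσstar] at hcost
  calc Iag y ≤ _ := by
        rw [hI y]
        exact sInf_le ⟨_, pi,
          fun i j => continuous_perturbedFlux (hq_cont i j) (hq_cont j i) (hK_cont i j),
          fun i j => perturbedFlux_periodic ((hpi_per i).mul (hw_per i j))
            ((hpi_per j).mul (hw_per j i)) (hK_per i j),
          perturbedFlux_nonneg hq_nonneg,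
          fun i j hij t => perturbedFlux_eq_zero (hq_zero i j hij t)
            (hq_zero j i (hE_swap' i j hij) t) (hK_zero i j hij t),
          hpi_diff, hpi_per, fun i t => (hpi_pos i t).le, hpi_sum,
          fun i t => by linarith [hpi_cont_eq i t, hflow i t], havg, rfl⟩
    _ ≤ ENNReal.ofReal (c ^ 2 / 4 * σstar) := hcost
    _ = _ := by
        rw [hc]
        ring_nf

theorem stmt7
    {V : Type} [Fintype V] [Nonempty V]
    (E : Finset (V × V)) (hE : ∀ i : V, (i, i) ∉ E)
    (hE_symm : ∀ i j : V, (i, j) ∈ E ↔ (j, i) ∈ E)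
    (τ : ℝ) (hτ : 0 < τ)
    (w : V → V → ℝ → ℝ)
    (hw_cont : ∀ i j, Continuous (w i j))
    (hw_per : ∀ i j, Function.Periodic (w i j) τ)
    (hw_pos : ∀ i j, (i, j) ∈ E → ∀ t, 0 < w i j t)
    (hw_zero : ∀ i j, (i, j) ∉ E → ∀ t, w i j t = 0)
    (pi : V → ℝ → ℝ)
    (hpi_diff : ∀ i, ContDiff ℝ 1 (pi i))
    (hpi_per : ∀ i, Function.Periodic (pi i) τ)
    (hpi_pos : ∀ i t, 0 < pi i t)
    (hpi_sum : ∀ t : ℝ, ∑ i, pi i t = 1)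
    (hpi_cont_eq : ∀ i t, deriv (pi i) t
      + (∑ j, pi i t * w i j t) - (∑ j, pi j t * w j i t) = 0)
    (hJ_ne : ∀ i j, (i, j) ∈ E → ∀ t : ℝ,
      pi i t * w i j t - pi j t * w j i t ≠ 0)
    (α : V → V → ℝ → ℝ)
    (hα_cont : ∀ i j, Continuous (α i j))
    (hα_per : ∀ i j, Function.Periodic (α i j) τ)
    (hα_anti : ∀ i j (t : ℝ), α i j t = - α j i t)
    (γ : V → ℝ → ℝ)
    (hγ_cont : ∀ i, Continuous (γ i))
    (hγ_per : ∀ i, Function.Periodic (γ i) τ)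
    (y0 : ℝ)
    (hy0 : y0 = (1 / τ) * (∫ t in (0:ℝ)..τ,
      ((∑ i, ∑ j, α i j t * (pi i t * w i j t)) + ∑ i, γ i t * pi i t)))
    (hy0_ne : y0 ≠ 0)
    (Iag : ℝ → ℝ≥0∞)
    (hI : ∀ y : ℝ, Iag y = sInf { c : ℝ≥0∞ |
      ∃ (Q : V → V → ℝ → ℝ) (ρ : V → ℝ → ℝ),
        (∀ i j, Continuous (Q i j)) ∧
        (∀ i j, Function.Periodic (Q i j) τ) ∧
        (∀ i j t, 0 ≤ Q i j t) ∧
        (∀ i j, (i, j) ∉ E → ∀ t, Q i j t = 0) ∧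
        (∀ i, ContDiff ℝ 1 (ρ i)) ∧
        (∀ i, Function.Periodic (ρ i) τ) ∧
        (∀ i t, 0 ≤ ρ i t) ∧
        (∀ t : ℝ, ∑ i, ρ i t = 1) ∧
        (∀ i t, deriv (ρ i) t + (∑ j, Q i j t) - (∑ j, Q j i t) = 0) ∧
        ((1 / τ) * (∫ t in (0:ℝ)..τ,
          ((∑ i, ∑ j, α i j t * Q i j t) + ∑ i, γ i t * ρ i t)) = y) ∧
        c = ∑ e ∈ E, ENNReal.ofReal (1 / τ) *
          (∫⁻ t in Set.Ioc (0:ℝ) τ, Phi (Q e.1 e.2 t) (ρ e.1 t * w e.1 e.2 t)) })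
    -- the divergence-free current 𝒦
    (K : V → V → ℝ → ℝ)
    (hK_cont : ∀ i j, Continuous (K i j))
    (hK_per : ∀ i j, Function.Periodic (K i j) τ)
    (hK_anti : ∀ i j (t : ℝ), K i j t = - K j i t)
    (hK_zero : ∀ i j, (i, j) ∉ E → ∀ t, K i j t = 0)
    (hK_div : ∀ i (t : ℝ), (∑ j, K i j t) = 0)
    (Kav : ℝ)
    (hKav : Kav = (1 / τ) * (∫ t in (0:ℝ)..τ, (1 / 2) * ∑ i, ∑ j, α i j t * K i j t))
    (hKav_ne : Kav ≠ 0)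
    (σstar : ℝ)
    (hσstar : σstar = (1 / 2) * ∑ e ∈ E, (1 / τ) * (∫ t in (0:ℝ)..τ,
      ((K e.1 e.2 t) ^ 2 / (pi e.1 t * w e.1 e.2 t - pi e.2 t * w e.2 e.1 t)) *
        Real.log ((pi e.1 t * w e.1 e.2 t) / (pi e.2 t * w e.2 e.1 t)))) :
    ∀ y : ℝ, Iag y ≤ ENNReal.ofReal ((1 / 4) * (σstar / Kav ^ 2) * (y - y0) ^ 2) :=
  stmt7_general E hE_symm τ hτ w hw_cont hw_per hw_pos hw_zero pi hpi_diff hpi_per hpi_pos hpi_sum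
    hpi_cont_eq hJ_ne α hα_cont hα_anti γ hγ_cont y0 hy0 Iag hI K hK_cont hK_per hK_anti hK_zero
    hK_div Kav hKav hKav_ne σstar hσstar
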